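/- Saalschütz's theorem: for a nonnegative integer N and complex parameters a, b, c with c and 1+a+b-c-N avoiding nonpositive-integer denominators, Σ_{n=0}^{N} [(a)_n (b)_n (-N)_n] / [(c)_n (1+a+b-c-N)_n n!] = (c-a)_N (c-b)_N / ((c)_N (c-a-b)_N). -/
import Mathlib


/-- Pochhammer symbol (rising factorial) for complex numbers. -/
noncomputable def ph (x : ℂ) (n : ℕ) : ℂ := ∏ i ∈ Finset.range n, (x + i)

lemma ph_zero (x : ℂ) : ph x 0 = 1 := by simp [ph]

lemma ph_succ (x : ℂ) (n : ℕ) : ph x (n+1) = ph x n * (x + n) := by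
  simp [ph, Finset.prod_range_succ]

lemma ph_succ' (x : ℂ) (n : ℕ) : ph x (n+1) = x * ph (x+1) n := by
  rw [ph, Finset.prod_range_succ']
  simp only [Nat.cast_zero, add_zero]
  rw [mul_comm, ph]
  congr 1
  refine Finset.prod_congr rfl fun i _ => ?_
  push_cast; ring

lemma ph_add (x : ℂ) (m n : ℕ) : ph x (m+n) = ph x m * ph (x + m) n := by
  rw [ph, Finset.prod_range_add]
  congr 1
  refine Finset.prod_congr rfl fun i _ => ?_
  push_cast; ring

lemma ph_split (x : ℂ) {n N : ℕ} (h : n ≤ N) :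
    ph x N = ph x n * ph (x + n) (N - n) := by
  conv_lhs => rw [← Nat.add_sub_cancel' h]
  exact ph_add x n (N - n)

lemma ph_ne_zero_of_le {x : ℂ} {n N : ℕ} (h : n ≤ N) (hN : ph x N ≠ 0) :
    ph x n ≠ 0 := fun h0 => hN (by rw [ph_split x h, h0, zero_mul])

lemma ph_reflect (x : ℂ) (n : ℕ) : ph (1 - x - n) n = (-1)^n * ph x n := by
  rw [ph, ph, ← Finset.prod_range_reflect (fun i => (x + i : ℂ)) n]
  have : ∀ i ∈ Finset.range n, (1 - x - (n:ℂ) + i) = -1 * (x + ((n - 1 - i : ℕ) : ℂ)) := by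
    intro i hi
    rw [Finset.mem_range] at hi
    have hc : ((n - 1 - i : ℕ) : ℂ) = (n : ℂ) - 1 - i := by
      rw [Nat.cast_sub (by omega : i ≤ n - 1), Nat.cast_sub (by omega : 1 ≤ n)]
      push_cast; ring
    rw [hc]; ring
  rw [Finset.prod_congr rfl this, Finset.prod_mul_distrib, Finset.prod_const]
  simp

lemma ph_neg_nat {n N : ℕ} (h : n ≤ N) :
    ph (-(N:ℂ)) n = (-1)^n * (n.factorial : ℂ) * (N.choose n : ℂ) := by
  have : ph (-(N:ℂ)) n = (-1)^n * ((N.descFactorial n : ℕ) : ℂ) := by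
    rw [ph, Nat.descFactorial_eq_prod_range, Nat.cast_prod]
    have : ∀ i ∈ Finset.range n, (-(N:ℂ) + i) = -1 * ((N - i : ℕ) : ℂ) := by
      intro i hi
      rw [Finset.mem_range] at hi
      rw [Nat.cast_sub (by omega : i ≤ N)]
      ring
    rw [Finset.prod_congr rfl this, Finset.prod_mul_distrib, Finset.prod_const]
    simp
  rw [this, Nat.descFactorial_eq_factorial_mul_choose]
  push_cast; ring

/-- WZ-style certificate for the Pfaff–Saalschütz polynomial identity. -/
noncomputable def Gc (N : ℕ) (a b c : ℂ) : ℕ → ℂ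
  | 0 => 0
  | (k+1) => -((N.choose k : ℕ) : ℂ) * ph a (k+1) * ph b (k+1) *
      ph (c - a - b + 1) (N - k) * ph (c + k + 1) (N - k)

lemma star : ∀ (N : ℕ) (a b c : ℂ),
    ∑ n ∈ Finset.range (N+1), ((N.choose n : ℕ) : ℂ) * ph a n * ph b n *
      ph (c - a - b) (N - n) * ph (c + n) (N - n)
      = ph (c - a) N * ph (c - b) N := by
  intro N
  induction N with
  | zero => intro a b c; simp [ph_zero]
  | succ N ih =>
    intro a b c
    have term : ∀ n ∈ Finset.range (N+2),
        ((N+1).choose n : ℂ) * ph a n * ph b n * ph (c-a-b) (N+1-n) * ph (c+n) (N+1-n)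
        = (c-a)*(c-b) * (((N.choose n : ℕ) : ℂ) * ph a n * ph b n *
            ph ((c+1)-a-b) (N-n) * ph ((c+1)+n) (N-n))
          + (Gc N a b c (n+1) - Gc N a b c n) := by
      intro n hn
      rw [Finset.mem_range] at hn
      match n with
      | 0 =>
        simp only [Gc, Nat.choose_zero_right, Nat.cast_one, Nat.cast_zero, add_zero,
          Nat.sub_zero, Nat.cast_ofNat, sub_zero]
        rw [ph_zero, ph_zero, ph_succ' (c-a-b), ph_succ' c,
          show c - a - b + 1 = (c+1)-a-b by ring, ph_succ a 0, ph_succ b 0, ph_zero, ph_zero]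
        push_cast
        ring
      | (k+1) =>
        have hk : k ≤ N := by omega
        rcases Nat.lt_or_ge k N with hkN | hkN
        · -- k < N
          obtain ⟨m, hm⟩ : ∃ m, N - k = m + 1 := ⟨N - k - 1, by omega⟩
          have h1 : N + 1 - (k+1) = m + 1 := by omega
          have h2 : N - (k+1) = m := by omega
          simp only [Gc, h1, h2, hm]
          have hrel : ((N.choose (k+1) : ℕ) : ℂ) * ((k:ℂ)+1)
              = ((N.choose k : ℕ) : ℂ) * ((m:ℂ)+1) := by
            have := Nat.choose_succ_right_eq N k
            have hNK : ((N - k : ℕ) : ℂ) = (m:ℂ)+1 := by rw [hm]; push_cast; ring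
            calc ((N.choose (k+1) : ℕ) : ℂ) * ((k:ℂ)+1)
                = (((N.choose (k+1)) * (k+1) : ℕ) : ℂ) := by push_cast; ring
              _ = (((N.choose k) * (N - k) : ℕ) : ℂ) := by rw [this]
              _ = ((N.choose k : ℕ) : ℂ) * ((m:ℂ)+1) := by rw [Nat.cast_mul, hNK]
          have hch : (((N+1).choose (k+1) : ℕ) : ℂ)
              = ((N.choose k : ℕ) : ℂ) + ((N.choose (k+1) : ℕ) : ℂ) := by
            rw [Nat.choose_succ_succ]; push_cast; ring
          rw [hch,
            ph_succ' (c-a-b) m, ph_succ' (c + ((k:ℕ)+1 : ℕ)) m,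
            ph_succ' (c + (k:ℂ) + 1) m,
            ph_succ (c-a-b+1) m, ph_succ a (k+1), ph_succ b (k+1)]
          push_cast
          rw [show c + ((k:ℂ)+1) + 1 = c + (k:ℂ) + 1 + 1 by ring,
            show (c+1) - a - b = c - a - b + 1 by ring,
            show c + 1 + ((k:ℂ)+1) = c + (k:ℂ) + 1 + 1 by ring]
          linear_combination (ph a (k+1) * ph b (k+1) * ph (c-a-b+1) m *
            ph (c + (k:ℂ) + 1 + 1) m * (c + (k:ℂ) + 1)) * hrel
        · -- k = N
          have hkN' : N = k := by omega
          subst hkN'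
          simp only [Gc, Nat.sub_self, Nat.choose_succ_self, Nat.choose_self,
            Nat.cast_zero, Nat.cast_one,
            show N + 1 - (N+1) = 0 from by omega, show N - (N+1) = 0 from by omega]
          simp only [ph_zero]
          ring
    rw [Finset.sum_congr rfl term, Finset.sum_add_distrib, Finset.sum_range_sub (Gc N a b c)]
    have hG0 : Gc N a b c 0 = 0 := rfl
    have hGtop : Gc N a b c (N+2) = 0 := by
      simp [Gc, Nat.choose_succ_self]
    rw [hG0, hGtop, sub_zero, ← Finset.mul_sum, Finset.sum_range_succ]
    simp only [Nat.choose_succ_self, Nat.cast_zero, zero_mul, add_zero, mul_zero, zero_add]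
    rw [ih a b (c+1), ph_succ' (c-a) N, ph_succ' (c-b) N,
      show c + 1 - a = c - a + 1 by ring, show c + 1 - b = c - b + 1 by ring]
    ring


/-- Saalschütz's theorem for a terminating balanced ₃F₂. -/
theorem saalschuetz (N : ℕ) (a b c : ℂ)
    (hc : ∀ n ≤ N, ph c n ≠ 0)
    (hd : ∀ n ≤ N, ph (1 + a + b - c - (N : ℂ)) n ≠ 0)
    (hcN : ph c N ≠ 0) (hab : ph (c - a - b) N ≠ 0) :
    ∑ n ∈ Finset.range (N + 1),
        ph a n * ph b n * ph (-(N : ℂ)) n /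
          (ph c n * ph (1 + a + b - c - (N : ℂ)) n * (n.factorial : ℂ)) =
      ph (c - a) N * ph (c - b) N / (ph c N * ph (c - a - b) N) := by
  have term : ∀ n ∈ Finset.range (N + 1),
      ph a n * ph b n * ph (-(N : ℂ)) n /
          (ph c n * ph (1 + a + b - c - (N : ℂ)) n * (n.factorial : ℂ))
      = ((N.choose n : ℕ) : ℂ) * ph a n * ph b n * ph (c - a - b) (N - n) *
          ph (c + n) (N - n) / (ph c N * ph (c - a - b) N) := by
    intro n hn
    rw [Finset.mem_range] at hn
    have h : n ≤ N := by omega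
    have hA : ph (-(N:ℂ)) n = (-1)^n * (n.factorial : ℂ) * (N.choose n : ℂ) :=
      ph_neg_nat h
    have hB : ph c N = ph c n * ph (c + n) (N - n) := ph_split c h
    have hC : ph (c - a - b) N
        = ph (c - a - b) (N - n) * ph (c - a - b + ((N - n : ℕ) : ℂ)) n := by
      have := ph_split (c - a - b) (Nat.sub_le N n)
      rwa [show N - (N - n) = n from by omega] at this
    have hD : ph (c - a - b + ((N - n : ℕ) : ℂ)) n
        = (-1)^n * ph (1 + a + b - c - (N:ℂ)) n := by
      rw [Nat.cast_sub h,
        show c - a - b + ((N:ℂ) - n) = 1 - (1 + a + b - c - (N:ℂ)) - (n:ℂ) by ring,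
        ph_reflect]
    have hcn : ph c n ≠ 0 := hc n h
    have hdn : ph (1 + a + b - c - (N:ℂ)) n ≠ 0 := hd n h
    have hfact : (n.factorial : ℂ) ≠ 0 := by
      exact_mod_cast Nat.cast_ne_zero.mpr (Nat.factorial_ne_zero n)
    have htail : ph (c + n) (N - n) ≠ 0 := by
      intro h0; exact hcN (by rw [hB, h0, mul_zero])
    have habn : ph (c - a - b) (N - n) ≠ 0 := by
      intro h0; exact hab (by rw [hC, h0, zero_mul])
    rw [div_eq_div_iff (by exact mul_ne_zero (mul_ne_zero hcn hdn) hfact)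
        (mul_ne_zero hcN hab), hA, hB, hC, hD]
    have hsq : ((-1 : ℂ)^n) * ((-1 : ℂ)^n) = 1 := by
      rw [← mul_pow]; norm_num
    linear_combination (ph a n * ph b n * (n.factorial : ℂ) * ((N.choose n : ℕ) : ℂ) *
      ph c n * ph (c + (n:ℂ)) (N - n) * ph (c - a - b) (N - n) *
      ph (1 + a + b - c - (N:ℂ)) n) * hsq
  rw [Finset.sum_congr rfl term, ← Finset.sum_div, star N a b c]
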